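/- Let r1, r2, d ∈ ℂ satisfy: k = r1 + r2 + 2d + 2 is an even integer with k ≥ 6, Re(r2) > Re(r1) + 1 > 1 and Re(d) > 0, and let 0 < ε < 1/2. Then there exists a constant C > 0 such that |J_{k−1}(x)| ≤ C·x^{Re(r2 − r1) − 1 − ε} for all real x > 0. -/

import Mathlib

/-!
Near `0` the series gives `|J_m(x)| ≤ e · (x/2)^m`. For large `x`, `u = √x · J_m` solves
`u'' + (1 - K / x²) u = 0` with `K = m² - 1/4 ≥ 0`, and along its solutions the energy
`(u'² + u²) · exp (K / x)` is nonincreasing; hence `u` is bounded and `J_m(x) = O(x^{-1/2})`.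
The hypotheses put the exponent `(r2 - r1).re - 1 - ε` in `[-1/2, k - 1]`, where `x ^ α` dominates
both regimes.
-/

open Real

noncomputable section

/-- Bessel function of the first kind of integer order `m`:
`J_m(x) = Σ_{j=0}^∞ (−1)^j/(j!·(j+m)!)·(x/2)^{2j+m}`. -/
def besselJ (m : ℕ) (x : ℝ) : ℝ :=
  ∑' j : ℕ, (-1 : ℝ) ^ j / ((j.factorial : ℝ) * ((j + m).factorial : ℝ)) * (x / 2) ^ (2 * j + m)

open scoped Nat
open Set

def besselCoeff (m j : ℕ) : ℝ := (-1 : ℝ) ^ j / ((j ! : ℝ) * ((j + m)! : ℝ))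

/-- The `p`-th derivative of the `j`-th term of `besselJ m`. The factor `descFactorial` vanishes
whenever the natural subtraction in the exponent truncates. -/
def besselTerm (m p j : ℕ) (x : ℝ) : ℝ :=
  besselCoeff m j * (2 * j + m).descFactorial p * (x / 2) ^ (2 * j + m - p) / 2 ^ p

def besselJDeriv (m p : ℕ) (x : ℝ) : ℝ := ∑' j, besselTerm m p j x

lemma abs_besselCoeff_le (m j : ℕ) : |besselCoeff m j| ≤ 1 / j ! := by
  have h : (1 : ℝ) ≤ (j + m)! := mod_cast (j + m).factorial_pos
  rw [besselCoeff, abs_div, abs_pow, abs_neg, abs_one, one_pow, abs_of_pos (by positivity)]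
  gcongr
  exact le_mul_of_one_le_right (by positivity) h

lemma besselCoeff_succ (m j : ℕ) :
    besselCoeff m (j + 1) * ((j + 1) * (j + 1 + m)) = -besselCoeff m j := by
  rw [besselCoeff, besselCoeff, add_right_comm, Nat.factorial_succ, Nat.factorial_succ]
  push_cast
  field_simp
  ring

lemma besselTerm_zero (m j : ℕ) (x : ℝ) :
    besselTerm m 0 j x = besselCoeff m j * (x / 2) ^ (2 * j + m) := by
  simp [besselTerm]

lemma besselJDeriv_zero (m : ℕ) : besselJDeriv m 0 = besselJ m := by
  ext x
  simp only [besselJDeriv, besselTerm_zero, besselJ, besselCoeff]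

lemma hasDerivAt_besselTerm (m p j : ℕ) (x : ℝ) :
    HasDerivAt (besselTerm m p j) (besselTerm m (p + 1) j x) x := by
  have hfun : besselTerm m p j = fun y =>
      besselCoeff m j * (2 * j + m).descFactorial p / 2 ^ p * (y / 2) ^ (2 * j + m - p) := by
    ext y; rw [besselTerm]; ring
  rw [hfun]
  refine ((((hasDerivAt_id' x).div_const 2).fun_pow (2 * j + m - p)).const_mul
    (besselCoeff m j * (2 * j + m).descFactorial p / 2 ^ p)).congr_deriv ?_
  simp only [besselTerm, Nat.descFactorial_succ, Nat.sub_sub]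
  push_cast
  ring

lemma abs_besselTerm_le (m p j : ℕ) {x R : ℝ} (hx : |x| ≤ R) (hR : 1 ≤ R) :
    |besselTerm m p j x| ≤ (2 ^ p * R) ^ (2 * j + m) / j ! := by
  set n := 2 * j + m
  have hdesc : (n.descFactorial p : ℝ) ≤ (2 ^ p) ^ n :=
    calc (n.descFactorial p : ℝ) ≤ (n : ℝ) ^ p := mod_cast n.descFactorial_le_pow p
      _ ≤ ((2 : ℝ) ^ n) ^ p := by gcongr; exact_mod_cast n.lt_two_pow_self.le
      _ = (2 ^ p) ^ n := by rw [← pow_mul, ← pow_mul, mul_comm]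
  have hpow : |x / 2| ^ (n - p) ≤ R ^ n :=
    calc |x / 2| ^ (n - p) ≤ R ^ (n - p) := by
          gcongr; rw [abs_div, abs_two]; linarith [abs_nonneg x]
      _ ≤ R ^ n := pow_le_pow_right₀ hR (Nat.sub_le _ _)
  rw [besselTerm, abs_div, abs_mul, abs_mul, abs_pow, Nat.abs_cast, abs_pow, abs_two, mul_pow]
  calc |besselCoeff m j| * (n.descFactorial p : ℝ) * |x / 2| ^ (n - p) / 2 ^ p
      ≤ 1 / j ! * (2 ^ p) ^ n * R ^ n / 1 := by
        gcongr
        · exact abs_besselCoeff_le m j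
        · exact one_le_pow₀ one_le_two
    _ = (2 ^ p) ^ n * R ^ n / j ! := by ring

lemma summable_pow_two_mul_add_div_factorial (m : ℕ) (b : ℝ) :
    Summable fun j : ℕ => b ^ (2 * j + m) / j ! :=
  ((Real.summable_pow_div_factorial (b ^ 2)).mul_left (b ^ m)).congr fun j => by ring

lemma summable_besselTerm (m p : ℕ) (x : ℝ) : Summable fun j => besselTerm m p j x :=
  (summable_pow_two_mul_add_div_factorial m _).of_norm_bounded fun j =>
    abs_besselTerm_le m p j (le_add_of_nonneg_right zero_le_one)
      (le_add_of_nonneg_left (abs_nonneg x))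

lemma hasDerivAt_besselJDeriv (m p : ℕ) (x : ℝ) :
    HasDerivAt (besselJDeriv m p) (besselJDeriv m (p + 1) x) x := by
  set R := |x| + 1
  have hR : 1 ≤ R := le_add_of_nonneg_left (abs_nonneg x)
  refine hasDerivAt_tsum_of_isPreconnected
    (summable_pow_two_mul_add_div_factorial m (2 ^ (p + 1) * R))
    (Metric.isOpen_ball (x := 0) (ε := R)) (convex_ball 0 R).isPreconnected
    (fun j y _ => hasDerivAt_besselTerm m p j y)
    (fun j y hy => abs_besselTerm_le m (p + 1) j ?_ hR)
    (Metric.mem_ball_self (by positivity)) (summable_besselTerm m p 0) ?_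
  · simpa [abs_lt] using (mem_ball_zero_iff.mp hy).le
  · simp [R]

lemma hasDerivAt_besselJ (m : ℕ) (x : ℝ) : HasDerivAt (besselJ m) (besselJDeriv m 1 x) x :=
  besselJDeriv_zero m ▸ hasDerivAt_besselJDeriv m 0 x

lemma pow_mul_besselTerm (m p j : ℕ) (x : ℝ) :
    x ^ p * besselTerm m p j x =
      (2 * j + m).descFactorial p * (besselCoeff m j * (x / 2) ^ (2 * j + m)) := by
  rcases le_or_gt p (2 * j + m) with hp | hp
  · have hsplit : (x / 2) ^ (2 * j + m) = (x / 2) ^ p * (x / 2) ^ (2 * j + m - p) := by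
      rw [← pow_add, Nat.add_sub_cancel' hp]
    rw [besselTerm, hsplit, div_pow x 2 p]
    field_simp
  · simp [besselTerm, Nat.descFactorial_eq_zero_iff_lt.mpr hp]

lemma descFactorial_two_add_descFactorial_one (n : ℕ) :
    n.descFactorial 2 + n.descFactorial 1 = n ^ 2 := by
  cases n with
  | zero => rfl
  | succ n => simp [Nat.descFactorial_succ]; ring

theorem besselJ_ode (m : ℕ) (x : ℝ) :
    x ^ 2 * besselJDeriv m 2 x + x * besselJDeriv m 1 x + (x ^ 2 - m ^ 2) * besselJ m x = 0 := by
  set a : ℕ → ℝ := fun j => besselCoeff m j * (x / 2) ^ (2 * j + m)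
  set B : ℕ → ℝ := fun j => x ^ 2 * a j
  set A : ℕ → ℝ := fun j => 4 * j * (j + m) * a j
  have hB : Summable B := by
    simpa [B, a, besselTerm_zero] using (summable_besselTerm m 0 x).mul_left (x ^ 2)
  have hA : HasSum A (-∑' j, B j) := by
    rw [← hasSum_nat_add_iff' 1]
    convert hB.hasSum.neg using 1
    · ext j
      have hc := besselCoeff_succ m j
      simp only [A, B, a]
      push_cast
      rw [show 2 * (j + 1) + m = 2 * j + m + 2 by ring, pow_add, ← neg_mul]
      linear_combination (4 * (x / 2) ^ (2 * j + m) * (x / 2) ^ 2) * hc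
    · simp [A]
  have hterms : HasSum (fun j => x ^ 2 * besselTerm m 2 j x + x * besselTerm m 1 j x
      + (x ^ 2 - m ^ 2) * besselTerm m 0 j x) 0 := by
    convert hA.add hB.hasSum using 1
    · ext j
      have h2 := pow_mul_besselTerm m 2 j x
      have h1 := pow_mul_besselTerm m 1 j x
      have hn : ((2 * j + m).descFactorial 2 : ℝ) + (2 * j + m).descFactorial 1
          = (2 * j + m) ^ 2 := mod_cast descFactorial_two_add_descFactorial_one _
      rw [pow_one] at h1
      rw [besselTerm_zero, h2, h1]
      simp only [A, B, a]
      linear_combination (besselCoeff m j * (x / 2) ^ (2 * j + m)) * hn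
    · simp
  rw [← besselJDeriv_zero]
  exact ((((summable_besselTerm m 2 x).hasSum.mul_left _).add
    ((summable_besselTerm m 1 x).hasSum.mul_left _)).add
    ((summable_besselTerm m 0 x).hasSum.mul_left _)).unique hterms

theorem antitoneOn_sq_add_sq_mul_exp {u u' u'' : ℝ → ℝ} {K : ℝ} (hK : 0 ≤ K)
    (hu : ∀ x > 0, HasDerivAt u (u' x) x) (hu' : ∀ x > 0, HasDerivAt u' (u'' x) x)
    (hode : ∀ x > 0, u'' x + (1 - K / x ^ 2) * u x = 0) :
    AntitoneOn (fun x => (u' x ^ 2 + u x ^ 2) * exp (K / x)) (Ioi 0) := by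
  have hderiv : ∀ x > 0, HasDerivAt (fun x => (u' x ^ 2 + u x ^ 2) * exp (K / x))
      (-(K / x ^ 2 * (u' x - u x) ^ 2 * exp (K / x))) x := by
    intro x hx
    refine ((((hu' x hx).fun_pow 2).fun_add ((hu x hx).fun_pow 2)).fun_mul
      (((hasDerivAt_const x K).fun_div (hasDerivAt_id' x) hx.ne').exp)).congr_deriv ?_
    rw [eq_neg_of_add_eq_zero_left (hode x hx)]
    field_simp
    ring
  refine antitoneOn_of_hasDerivWithinAt_nonpos (convex_Ioi 0)
    (f' := fun x => -(K / x ^ 2 * (u' x - u x) ^ 2 * exp (K / x)))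
    (fun x hx => (hderiv x hx).continuousAt.continuousWithinAt) (fun x hx => ?_) (fun x hx => ?_)
  · rw [interior_Ioi] at hx ⊢
    exact (hderiv x hx).hasDerivWithinAt
  · rw [interior_Ioi] at hx
    have : 0 < x := hx
    rw [neg_nonpos]
    positivity

theorem abs_le_of_ode {u u' u'' : ℝ → ℝ} {K : ℝ} (hK : 0 ≤ K)
    (hu : ∀ x > 0, HasDerivAt u (u' x) x) (hu' : ∀ x > 0, HasDerivAt u' (u'' x) x)
    (hode : ∀ x > 0, u'' x + (1 - K / x ^ 2) * u x = 0) {x : ℝ} (hx : 1 ≤ x) :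
    |u x| ≤ √((u' 1 ^ 2 + u 1 ^ 2) * exp K) := by
  have hmono := antitoneOn_sq_add_sq_mul_exp hK hu hu' hode (mem_Ioi.2 one_pos)
    (mem_Ioi.2 (one_pos.trans_le hx)) hx
  have hexp : 1 ≤ exp (K / x) := one_le_exp (by positivity)
  simp only [div_one] at hmono
  apply abs_le_sqrt
  nlinarith [sq_nonneg (u' x), sq_nonneg (u x)]

/-- The substitution `u = √x f` turns Bessel's equation of order `ν` into
`u'' + (1 - (ν ^ 2 - 1 / 4) / x ^ 2) u = 0`. -/
theorem exists_abs_le_div_sqrt_of_besselODE {f f' f'' : ℝ → ℝ} {ν : ℝ}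
    (hν : 1 / 4 ≤ ν ^ 2)
    (hf : ∀ x > 0, HasDerivAt f (f' x) x) (hf' : ∀ x > 0, HasDerivAt f' (f'' x) x)
    (hode : ∀ x > 0, x ^ 2 * f'' x + x * f' x + (x ^ 2 - ν ^ 2) * f x = 0) :
    ∃ M, ∀ x ≥ 1, |f x| ≤ M / √x := by
  set u' : ℝ → ℝ := fun x => f x / (2 * √x) + √x * f' x
  set u'' : ℝ → ℝ := fun x => f' x / √x + √x * f'' x - f x / (4 * x * √x)
  have hsqrt : ∀ x > 0, HasDerivAt sqrt (1 / (2 * √x)) x := fun x hx =>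
    hasDerivAt_sqrt hx.ne'
  have hu : ∀ x > 0, HasDerivAt (fun y => √y * f y) (u' x) x := fun x hx =>
    ((hsqrt x hx).fun_mul (hf x hx)).congr_deriv (by simp only [u']; ring)
  have hu' : ∀ x > 0, HasDerivAt u' (u'' x) x := by
    intro x hx
    have hs : √x ≠ 0 := (sqrt_pos.2 hx).ne'
    refine (((hf x hx).fun_div ((hsqrt x hx).const_mul 2) (by positivity)).fun_add
      ((hsqrt x hx).fun_mul (hf' x hx))).congr_deriv ?_
    simp only [u'']
    field_simp
    rw [sq_sqrt hx.le]
    ring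
  have hu_ode : ∀ x > 0, u'' x + (1 - (ν ^ 2 - 1 / 4) / x ^ 2) * (√x * f x) = 0 := by
    intro x hx
    have hs : 0 < √x := sqrt_pos.2 hx
    simp only [u'']
    field_simp
    rw [sq_sqrt hx.le]
    linear_combination 4 * x * hode x hx
  refine ⟨√((u' 1 ^ 2 + (√1 * f 1) ^ 2) * exp (ν ^ 2 - 1 / 4)), fun x hx => ?_⟩
  have hx0 : 0 < √x := sqrt_pos.2 (one_pos.trans_le hx)
  have hbound := abs_le_of_ode (by linarith) hu hu' hu_ode hx
  rw [abs_mul, abs_of_pos hx0] at hbound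
  rwa [le_div_iff₀ hx0, mul_comm]

lemma abs_besselJ_le_of_abs_le_two (m : ℕ) {x : ℝ} (hx : |x| ≤ 2) :
    |besselJ m x| ≤ exp 1 * |x / 2| ^ m := by
  have hexp : HasSum (fun j : ℕ => 1 / (j ! : ℝ) * |x / 2| ^ m) (exp 1 * |x / 2| ^ m) := by
    rw [exp_eq_exp_ℝ]
    refine ((NormedSpace.expSeries_div_hasSum_exp (1 : ℝ)).mul_right _).congr_fun fun j => ?_
    rw [one_pow]
  refine tsum_of_norm_bounded (f := fun j => besselCoeff m j * (x / 2) ^ (2 * j + m))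
    hexp fun j => ?_
  have hx2 : |x / 2| ≤ 1 := by rw [abs_div, abs_two]; linarith
  rw [norm_mul, norm_pow, Real.norm_eq_abs, Real.norm_eq_abs, pow_add]
  gcongr
  · exact abs_besselCoeff_le m j
  · exact mul_le_of_le_one_left (by positivity) (pow_le_one₀ (abs_nonneg _) hx2)

theorem exists_abs_besselJ_le_rpow {m : ℕ} (hm : m ≠ 0) {α : ℝ} (hα : -(1 / 2) ≤ α)
    (hαm : α ≤ m) : ∃ C > (0 : ℝ), ∀ x : ℝ, 0 < x → |besselJ m x| ≤ C * x ^ α := by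
  have hν : 1 / 4 ≤ (m : ℝ) ^ 2 := by
    have : (1 : ℝ) ≤ m := mod_cast Nat.one_le_iff_ne_zero.2 hm
    nlinarith
  obtain ⟨M, hM⟩ := exists_abs_le_div_sqrt_of_besselODE hν (fun x _ => hasDerivAt_besselJ m x)
    (fun x _ => hasDerivAt_besselJDeriv m 1 x) (fun x _ => besselJ_ode m x)
  refine ⟨exp 1 + |M|, by positivity, fun x hx => ?_⟩
  rcases le_or_gt x 1 with hx1 | hx1
  · have hpow : (x / 2) ^ m ≤ x ^ α :=
      calc (x / 2) ^ m ≤ x ^ m := by gcongr; linarith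
        _ = x ^ (m : ℝ) := (rpow_natCast x m).symm
        _ ≤ x ^ α := rpow_le_rpow_of_exponent_ge hx hx1 hαm
    calc |besselJ m x| ≤ exp 1 * |x / 2| ^ m :=
          abs_besselJ_le_of_abs_le_two m (by rw [abs_of_pos hx]; linarith)
      _ ≤ exp 1 * x ^ α := by rw [abs_of_pos (half_pos hx)]; gcongr
      _ ≤ (exp 1 + |M|) * x ^ α := by gcongr; exact le_add_of_nonneg_right (abs_nonneg M)
  · calc |besselJ m x| ≤ M / √x := hM x hx1.le
      _ ≤ |M| * x ^ (-(1 / 2) : ℝ) := by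
          rw [sqrt_eq_rpow, rpow_neg hx.le, div_eq_mul_inv]
          gcongr
          exact le_abs_self M
      _ ≤ |M| * x ^ α := by gcongr; exact hx1.le
      _ ≤ (exp 1 + |M|) * x ^ α := by gcongr; exact le_add_of_nonneg_left (exp_pos 1).le

theorem besselJ_power_bound_general
    (k : ℕ) (hk6 : 6 ≤ k)
    (r1 r2 d : ℂ) (hsum : r1 + r2 + 2 * d + 2 = (k : ℂ))
    (h21 : r1.re + 1 < r2.re) (h11 : 1 < r1.re + 1) (hd : 0 < d.re)
    (ε : ℝ) (hε0 : 0 < ε) (hε : ε < 1 / 2) :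
    ∃ C > (0 : ℝ), ∀ x : ℝ, 0 < x →
      |besselJ (k - 1) x| ≤ C * x ^ ((r2 - r1).re - 1 - ε) := by
  have hre : r1.re + r2.re + 2 * d.re + 2 = k := by simpa using congrArg Complex.re hsum
  have hk : ((k - 1 : ℕ) : ℝ) = k - 1 := by rw [Nat.cast_sub (by omega), Nat.cast_one]
  refine exists_abs_besselJ_le_rpow (by omega) ?_ ?_ <;> rw [Complex.sub_re]
  · linarith
  · rw [hk]; linarith

/-- Power bound for the Bessel function `J_{k−1}`. -/
theorem besselJ_power_bound
    (k : ℕ) (hke : Even k) (hk6 : 6 ≤ k)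
    (r1 r2 d : ℂ) (hsum : r1 + r2 + 2 * d + 2 = (k : ℂ))
    (h21 : r1.re + 1 < r2.re) (h11 : 1 < r1.re + 1) (hd : 0 < d.re)
    (ε : ℝ) (hε0 : 0 < ε) (hε : ε < 1 / 2) :
    ∃ C > (0 : ℝ), ∀ x : ℝ, 0 < x →
      |besselJ (k - 1) x| ≤ C * x ^ ((r2 - r1).re - 1 - ε) :=
  besselJ_power_bound_general k hk6 r1 r2 d hsum h21 h11 hd ε hε0 hε

end
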